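/- arXiv:1204.5531 — 6 statements merged into one kernel-verified Lean document; each statement's English description precedes it below -/
import Mathlib

section
/- Let (f, φ) : (S₁, G₁, int₁) → (S₂, G₂, int₂) be a morphism of generalized interval systems, where S₁ is nonempty. Then the function f : S₁ → S₂ is bijective if and only if the group homomorphism φ : G₁ → G₂ is bijective. -/
/-! Choosing a base point `s₀ ∈ S₁`, the maps `int₁ s₀ : S₁ → G₁` and `int₂ (f s₀) : S₂ → G₂` are
bijections by the simple transitivity axiom, and the morphism condition says that they turn `f` into
`φ`. -/

open Function

theorem Function.bijective_iff_of_comp_eq {α β γ δ : Type*} {f : α → β} {g : γ → δ}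
    {u : α → γ} {v : β → δ} (hu : Bijective u) (hv : Bijective v) (h : v ∘ f = g ∘ u) :
    Bijective f ↔ Bijective g := by
  rw [← hv.of_comp_iff' f, h, hu.of_comp_iff g]

theorem stmt_2_general {S₁ S₂ G₁ G₂ : Type*} [Group G₁] [Group G₂] [Nonempty S₁]
    (int₁ : S₁ → S₁ → G₁) (int₂ : S₂ → S₂ → G₂)
    (huniq₁ : ∀ (s : S₁) (i : G₁), ∃! t : S₁, int₁ s t = i)
    (huniq₂ : ∀ (s : S₂) (i : G₂), ∃! t : S₂, int₂ s t = i)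
    (f : S₁ → S₂) (φ : G₁ →* G₂)
    (hmor : ∀ s t : S₁, int₂ (f s) (f t) = φ (int₁ s t)) :
    Function.Bijective f ↔ Function.Bijective φ := by
  obtain ⟨s₀⟩ := ‹Nonempty S₁›
  exact bijective_iff_of_comp_eq (bijective_iff_existsUnique _ |>.mpr (huniq₁ s₀))
    (bijective_iff_existsUnique _ |>.mpr (huniq₂ (f s₀))) (funext (hmor s₀))

/-- For a morphism (f, φ) of generalized interval systems with S₁ nonempty,
f is bijective iff φ is bijective. -/
theorem stmt_2 {S₁ S₂ G₁ G₂ : Type*} [Group G₁] [Group G₂] [Nonempty S₁]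
    (int₁ : S₁ → S₁ → G₁) (int₂ : S₂ → S₂ → G₂)
    (huniq₁ : ∀ (s : S₁) (i : G₁), ∃! t : S₁, int₁ s t = i)
    (hcomp₁ : ∀ s t u : S₁, int₁ s t * int₁ t u = int₁ s u)
    (huniq₂ : ∀ (s : S₂) (i : G₂), ∃! t : S₂, int₂ s t = i)
    (hcomp₂ : ∀ s t u : S₂, int₂ s t * int₂ t u = int₂ s u)
    (f : S₁ → S₂) (φ : G₁ →* G₂)
    (hmor : ∀ s t : S₁, int₂ (f s) (f t) = φ (int₁ s t)) :
    Function.Bijective f ↔ Function.Bijective φ :=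
  stmt_2_general int₁ int₂ huniq₁ huniq₂ f φ hmor
end

section
/- Let G, H ≤ Sym(S) be dual groups in the sense of Lewin, let G₀ be a subgroup of G, let s₀ ∈ S, and let S₀ = { g(s₀) : g ∈ G₀ }. Then H₀ := { h ∈ H : h(s₀) ∈ S₀ } is a subgroup of H, every element of H₀ preserves S₀ as a set, and H₀ acts simply transitively on S₀: for all x, y ∈ S₀ there is a unique h ∈ H₀ with h(x) = y. -/
/-!
Every `h ∈ H` centralizes `G₀ ≤ G`, so `h (g s₀) = g (h s₀)`: an element of `H` maps a point of
the orbit `S₀` back into `S₀` exactly when it maps `s₀` into `S₀`. Closure under products and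
inverses and simple transitivity on `S₀` then come from the corresponding properties of `H`.
-/

open Equiv Subgroup

/-- The orbit of `s₀` under a subgroup `G₀` of the symmetric group. -/
def orbitSet {S : Type*} (G₀ : Subgroup (Equiv.Perm S)) (s₀ : S) : Set S :=
  {x | ∃ g ∈ G₀, g s₀ = x}

/-- The set H₀ of elements of H carrying s₀ into the orbit S₀ of s₀ under G₀. -/
def Hsub {S : Type*} (H G₀ : Subgroup (Equiv.Perm S)) (s₀ : S) : Set (Equiv.Perm S) :=
  {h | h ∈ H ∧ h s₀ ∈ orbitSet G₀ s₀}

section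

variable {S : Type*} {G₀ : Subgroup (Perm S)} {s₀ : S}

theorem self_mem_orbitSet : s₀ ∈ orbitSet G₀ s₀ := ⟨1, G₀.one_mem, rfl⟩

theorem apply_mem_orbitSet_iff {g : Perm S} (hg : g ∈ G₀) {x : S} :
    g x ∈ orbitSet G₀ s₀ ↔ x ∈ orbitSet G₀ s₀ := by
  constructor
  · rintro ⟨g', hg', hgx⟩
    exact ⟨g⁻¹ * g', G₀.mul_mem (G₀.inv_mem hg) hg', by simp [Perm.mul_apply, hgx]⟩
  · rintro ⟨g', hg', rfl⟩
    exact ⟨g * g', G₀.mul_mem hg hg', rfl⟩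

theorem apply_mem_orbitSet_iff_of_mem_centralizer {h : Perm S}
    (hh : h ∈ centralizer (G₀ : Set (Perm S))) {x : S} (hx : x ∈ orbitSet G₀ s₀) :
    h x ∈ orbitSet G₀ s₀ ↔ h s₀ ∈ orbitSet G₀ s₀ := by
  obtain ⟨g, hg, rfl⟩ := hx
  have hcomm : h (g s₀) = g (h s₀) := by
    rw [← Perm.mul_apply, ← mem_centralizer_iff.mp hh g hg, Perm.mul_apply]
  rw [hcomm, apply_mem_orbitSet_iff hg]

variable {H : Subgroup (Perm S)}

theorem one_mem_Hsub : (1 : Perm S) ∈ Hsub H G₀ s₀ := ⟨H.one_mem, self_mem_orbitSet⟩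

theorem apply_mem_orbitSet_of_mem_Hsub (hH : H ≤ centralizer (G₀ : Set (Perm S)))
    {h : Perm S} (hh : h ∈ Hsub H G₀ s₀) {x : S}
    (hx : x ∈ orbitSet G₀ s₀) : h x ∈ orbitSet G₀ s₀ :=
  (apply_mem_orbitSet_iff_of_mem_centralizer (hH hh.1) hx).2 hh.2

theorem mul_mem_Hsub (hH : H ≤ centralizer (G₀ : Set (Perm S)))
    {a b : Perm S} (ha : a ∈ Hsub H G₀ s₀) (hb : b ∈ Hsub H G₀ s₀) :
    a * b ∈ Hsub H G₀ s₀ :=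
  ⟨H.mul_mem ha.1 hb.1, apply_mem_orbitSet_of_mem_Hsub hH ha hb.2⟩

theorem inv_mem_Hsub (hH : H ≤ centralizer (G₀ : Set (Perm S)))
    {a : Perm S} (ha : a ∈ Hsub H G₀ s₀) : a⁻¹ ∈ Hsub H G₀ s₀ := by
  refine ⟨H.inv_mem ha.1, ?_⟩
  have h := apply_mem_orbitSet_iff_of_mem_centralizer (hH (H.inv_mem ha.1)) ha.2
  rw [Perm.inv_def, symm_apply_apply] at h
  exact h.1 self_mem_orbitSet

theorem existsUnique_mem_Hsub_apply_eq (hH : H ≤ centralizer (G₀ : Set (Perm S)))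
    (hHst : ∀ s t : S, ∃! h : H, (h : Perm S) s = t)
    {x y : S} (hx : x ∈ orbitSet G₀ s₀) (hy : y ∈ orbitSet G₀ s₀) :
    ∃! h : Perm S, h ∈ Hsub H G₀ s₀ ∧ h x = y := by
  obtain ⟨⟨h, hmem⟩, hhx, huniq⟩ := hHst x y
  have hs₀ : h s₀ ∈ orbitSet G₀ s₀ :=
    (apply_mem_orbitSet_iff_of_mem_centralizer (hH hmem) hx).1 (hhx ▸ hy)
  refine ⟨h, ⟨⟨hmem, hs₀⟩, hhx⟩, ?_⟩
  rintro h' ⟨⟨hh', -⟩, hx'⟩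
  exact congrArg Subtype.val (huniq ⟨h', hh'⟩ hx')

end

theorem stmt_12_general {S : Type*} (G H : Subgroup (Equiv.Perm S))
    (hHst : ∀ s t : S, ∃! h : H, (h : Equiv.Perm S) s = t)
    (hGH : Subgroup.centralizer (G : Set (Equiv.Perm S)) = H)
    (G₀ : Subgroup (Equiv.Perm S)) (hG₀ : G₀ ≤ G) (s₀ : S) :
    (1 : Equiv.Perm S) ∈ Hsub H G₀ s₀ ∧
    (∀ a ∈ Hsub H G₀ s₀, ∀ b ∈ Hsub H G₀ s₀, a * b ∈ Hsub H G₀ s₀) ∧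
    (∀ a ∈ Hsub H G₀ s₀, a⁻¹ ∈ Hsub H G₀ s₀) ∧
    (∀ h ∈ Hsub H G₀ s₀, ∀ x ∈ orbitSet G₀ s₀, h x ∈ orbitSet G₀ s₀) ∧
    (∀ x ∈ orbitSet G₀ s₀, ∀ y ∈ orbitSet G₀ s₀,
      ∃! h : Equiv.Perm S, h ∈ Hsub H G₀ s₀ ∧ h x = y) := by
  have hH : H ≤ centralizer (G₀ : Set (Perm S)) := hGH ▸ centralizer_le hG₀
  exact ⟨one_mem_Hsub, fun _ ha _ hb => mul_mem_Hsub hH ha hb, fun _ ha => inv_mem_Hsub hH ha,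
    fun _ hh _ hx => apply_mem_orbitSet_of_mem_Hsub hH hh hx,
    fun _ hx _ hy => existsUnique_mem_Hsub_apply_eq hH hHst hx hy⟩

/-- With G, H ≤ Sym(S) dual, G₀ ≤ G, S₀ the G₀-orbit of s₀, the set
H₀ = { h ∈ H : h(s₀) ∈ S₀ } is a subgroup of H, preserves S₀, and acts simply
transitively on S₀. -/
theorem stmt_12 {S : Type*} (G H : Subgroup (Equiv.Perm S))
    (hGst : ∀ s t : S, ∃! g : G, (g : Equiv.Perm S) s = t)
    (hHst : ∀ s t : S, ∃! h : H, (h : Equiv.Perm S) s = t)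
    (hGH : Subgroup.centralizer (G : Set (Equiv.Perm S)) = H)
    (hHG : Subgroup.centralizer (H : Set (Equiv.Perm S)) = G)
    (G₀ : Subgroup (Equiv.Perm S)) (hG₀ : G₀ ≤ G) (s₀ : S) :
    (1 : Equiv.Perm S) ∈ Hsub H G₀ s₀ ∧
    (∀ a ∈ Hsub H G₀ s₀, ∀ b ∈ Hsub H G₀ s₀, a * b ∈ Hsub H G₀ s₀) ∧
    (∀ a ∈ Hsub H G₀ s₀, a⁻¹ ∈ Hsub H G₀ s₀) ∧
    (∀ h ∈ Hsub H G₀ s₀, ∀ x ∈ orbitSet G₀ s₀, h x ∈ orbitSet G₀ s₀) ∧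
    (∀ x ∈ orbitSet G₀ s₀, ∀ y ∈ orbitSet G₀ s₀,
      ∃! h : Equiv.Perm S, h ∈ Hsub H G₀ s₀ ∧ h x = y) :=
  stmt_12_general G H hHst hGH G₀ hG₀ s₀
end

section
/- Let G, H ≤ Sym(S) be dual groups in the sense of Lewin, let G₀ be a subgroup of G, let s₀ ∈ S, let S₀ = { g(s₀) : g ∈ G₀ }, and let H₀ = { h ∈ H : h(s₀) ∈ S₀ }. Suppose g : S₀ → S₀ is a bijection of S₀ that commutes with the restriction to S₀ of every element of H₀, i.e. g(h(x)) = h(g(x)) for all h ∈ H₀ and x ∈ S₀. Then there is a unique ĝ ∈ G whose restriction to S₀ equals g, and moreover ĝ ∈ G₀. -/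
theorem mem_orbitSet_self {S : Type*} (G₀ : Subgroup (Equiv.Perm S)) (s₀ : S) :
    s₀ ∈ orbitSet G₀ s₀ :=
  ⟨1, G₀.one_mem, rfl⟩

namespace Equiv.Perm

variable {S : Type*} {H : Subgroup (Perm S)} {a b : Perm S}

theorem apply_apply_of_mem_centralizer (ha : a ∈ Subgroup.centralizer (H : Set (Perm S)))
    {h : Perm S} (hh : h ∈ H) (x : S) : a (h x) = h (a x) :=
  (DFunLike.congr_fun (Subgroup.mem_centralizer_iff.mp ha h hh) x).symm

theorem eq_of_mem_centralizer_of_apply_eq (hH : ∀ s t : S, ∃ h ∈ H, h s = t)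
    (ha : a ∈ Subgroup.centralizer (H : Set (Perm S)))
    (hb : b ∈ Subgroup.centralizer (H : Set (Perm S))) {s₀ : S} (hab : a s₀ = b s₀) :
    a = b := by
  ext x
  obtain ⟨h, hh, rfl⟩ := hH s₀ x
  rw [apply_apply_of_mem_centralizer ha hh, apply_apply_of_mem_centralizer hb hh, hab]

end Equiv.Perm

open Equiv.Perm in
theorem eqOn_orbitSet_of_mem_centralizer {S : Type*} {H G₀ : Subgroup (Equiv.Perm S)} {s₀ : S}
    (hH : ∀ s t : S, ∃ h ∈ H, h s = t) {a : Equiv.Perm S}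
    (ha : a ∈ Subgroup.centralizer (H : Set (Equiv.Perm S))) {g : S → S} (has₀ : a s₀ = g s₀)
    (hcomm : ∀ h ∈ Hsub H G₀ s₀, ∀ x ∈ orbitSet G₀ s₀, g (h x) = h (g x)) :
    Set.EqOn a g (orbitSet G₀ s₀) := by
  intro x hx
  obtain ⟨h, hh, rfl⟩ := hH s₀ x
  rw [apply_apply_of_mem_centralizer ha hh, has₀, hcomm h ⟨hh, hx⟩ s₀ (mem_orbitSet_self G₀ s₀)]

theorem stmt_13_general {S : Type*} (G H : Subgroup (Equiv.Perm S))
    (hHst : ∀ s t : S, ∃! h : H, (h : Equiv.Perm S) s = t)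
    (hHG : Subgroup.centralizer (H : Set (Equiv.Perm S)) = G)
    (G₀ : Subgroup (Equiv.Perm S)) (hG₀ : G₀ ≤ G) (s₀ : S)
    (g : S → S)
    (hbij : Set.BijOn g (orbitSet G₀ s₀) (orbitSet G₀ s₀))
    (hcomm : ∀ h ∈ Hsub H G₀ s₀, ∀ x ∈ orbitSet G₀ s₀, g (h x) = h (g x)) :
    (∃! gExt : Equiv.Perm S, gExt ∈ G ∧ Set.EqOn (gExt : S → S) g (orbitSet G₀ s₀)) ∧
    (∀ gExt : Equiv.Perm S, gExt ∈ G → Set.EqOn (gExt : S → S) g (orbitSet G₀ s₀) → gExt ∈ G₀) := by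
  subst hHG
  have hH : ∀ s t : S, ∃ h ∈ H, h s = t := fun s t ↦
    let ⟨h, hh⟩ := (hHst s t).exists; ⟨h, h.2, hh⟩
  have hs₀ := mem_orbitSet_self G₀ s₀
  obtain ⟨g₁, hg₁G₀, hg₁s₀⟩ := hbij.mapsTo hs₀
  have hg₁ : g₁ ∈ Subgroup.centralizer (H : Set (Equiv.Perm S)) := hG₀ hg₁G₀
  have eq_g₁ : ∀ gExt ∈ Subgroup.centralizer (H : Set (Equiv.Perm S)),
      Set.EqOn gExt g (orbitSet G₀ s₀) → gExt = g₁ := fun gExt hgExt hEq ↦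
    Equiv.Perm.eq_of_mem_centralizer_of_apply_eq hH hgExt hg₁ ((hEq hs₀).trans hg₁s₀.symm)
  refine ⟨⟨g₁, ⟨hg₁, eqOn_orbitSet_of_mem_centralizer hH hg₁ hg₁s₀ hcomm⟩,
    fun gExt h ↦ eq_g₁ gExt h.1 h.2⟩, fun gExt hgExt hEq ↦ ?_⟩
  rwa [eq_g₁ gExt hgExt hEq]

/-- With G, H ≤ Sym(S) dual, G₀ ≤ G, S₀ the G₀-orbit of s₀, and
H₀ = { h ∈ H : h(s₀) ∈ S₀ }: if g is a bijection of S₀ commuting on S₀ with every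
element of H₀, then g extends uniquely to an element gExt of G, and any such
extension lies in G₀. -/
theorem stmt_13 {S : Type*} (G H : Subgroup (Equiv.Perm S))
    (hGst : ∀ s t : S, ∃! g : G, (g : Equiv.Perm S) s = t)
    (hHst : ∀ s t : S, ∃! h : H, (h : Equiv.Perm S) s = t)
    (hGH : Subgroup.centralizer (G : Set (Equiv.Perm S)) = H)
    (hHG : Subgroup.centralizer (H : Set (Equiv.Perm S)) = G)
    (G₀ : Subgroup (Equiv.Perm S)) (hG₀ : G₀ ≤ G) (s₀ : S)
    (g : S → S)
    (hbij : Set.BijOn g (orbitSet G₀ s₀) (orbitSet G₀ s₀))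
    (hcomm : ∀ h ∈ Hsub H G₀ s₀, ∀ x ∈ orbitSet G₀ s₀, g (h x) = h (g x)) :
    (∃! gExt : Equiv.Perm S, gExt ∈ G ∧ Set.EqOn (gExt : S → S) g (orbitSet G₀ s₀)) ∧
    (∀ gExt : Equiv.Perm S, gExt ∈ G → Set.EqOn (gExt : S → S) g (orbitSet G₀ s₀) → gExt ∈ G₀) :=
  stmt_13_general G H hHst hHG G₀ hG₀ s₀ g hbij hcomm
end

section
/- Fix integers m ≥ 1 and n ≥ 1. Each contextual inversion J^{q,r} (for q, r ∈ {1, …, n}) is an involution, hence a permutation of (ℤ/mℤ)ⁿ. Let G₀ be the subgroup of Sym((ℤ/mℤ)ⁿ) generated by the contextual inversions { J^{q,r} : q, r ∈ {1, …, n} }. Then for every affine map f : ℤ/mℤ → ℤ/mℤ, f(z) = az + b, applied componentwise, and for every g ∈ G₀, one has f ∘ g(Y) = g ∘ f(Y) for all Y ∈ (ℤ/mℤ)ⁿ. -/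
/-! The coefficients of `-y_i + y_q + y_r` sum to `1`, so a contextual inversion commutes with a
componentwise affine map `z ↦ a z + b`: the translations cancel. The permutations commuting with a
fixed self-map form a subgroup, so every element of the group generated by the contextual
inversions commutes with it as well. -/

/-- The contextual inversion J^{q,r} on pitch-class segments Y ∈ (ℤ/mℤ)ⁿ, sending
Y to the tuple with i-th entry −y_i + y_q + y_r. -/
def Jqr (m n : ℕ) (q r : Fin n) (Y : Fin n → ZMod m) : Fin n → ZMod m :=
  fun i => -(Y i) + Y q + Y r

namespace Equiv.Perm

variable {α : Type*}

def commuteSubgroup (f : α → α) : Subgroup (Perm α) where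
  carrier := {g | Function.Commute f g}
  one_mem' := Function.Commute.id_right
  mul_mem' hg hh := hg.comp_right hh
  inv_mem' {g} hg := hg.inverses_right g.apply_symm_apply g.symm_apply_apply

theorem mem_commuteSubgroup {f : α → α} {g : Perm α} :
    g ∈ commuteSubgroup f ↔ Function.Commute f g :=
  Iff.rfl

end Equiv.Perm

theorem Jqr_involutive (m n : ℕ) (q r : Fin n) : Function.Involutive (Jqr m n q r) := by
  intro Y
  funext i
  simp only [Jqr]
  ring

theorem Jqr_commute_affine (m n : ℕ) (q r : Fin n) (a b : ZMod m) :
    Function.Commute (fun Y i => a * Y i + b) (Jqr m n q r) := by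
  intro Y
  funext i
  simp only [Jqr]
  ring

theorem stmt_16_general (m n : ℕ) :
    (∀ q r : Fin n, Function.Involutive (Jqr m n q r)) ∧
    (∀ a b : ZMod m,
      ∀ g ∈ Subgroup.closure {p : Equiv.Perm (Fin n → ZMod m) |
          ∃ q r : Fin n, (p : (Fin n → ZMod m) → (Fin n → ZMod m)) = Jqr m n q r},
        ∀ Y : Fin n → ZMod m,
          (fun i => a * (g Y) i + b) = g (fun i => a * Y i + b)) := by
  refine ⟨Jqr_involutive m n, fun a b g hg => ?_⟩
  have generators_commute : {p : Equiv.Perm (Fin n → ZMod m) | ∃ q r : Fin n, ⇑p = Jqr m n q r} ⊆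
      Equiv.Perm.commuteSubgroup (fun (Y : Fin n → ZMod m) i => a * Y i + b) := by
    rintro p ⟨q, r, hp⟩
    rw [SetLike.mem_coe, Equiv.Perm.mem_commuteSubgroup, hp]
    exact Jqr_commute_affine m n q r a b
  exact Equiv.Perm.mem_commuteSubgroup.mp (Subgroup.closure_le _ |>.mpr generators_commute hg)

/-- Each contextual inversion J^{q,r} is an involution (hence a
permutation of (ℤ/mℤ)ⁿ), and every element of the subgroup of Sym((ℤ/mℤ)ⁿ)
generated by the contextual inversions commutes with every componentwise affine
map f(z) = az + b. -/
theorem stmt_16 (m n : ℕ) (hm : 1 ≤ m) (hn : 1 ≤ n) :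
    (∀ q r : Fin n, Function.Involutive (Jqr m n q r)) ∧
    (∀ a b : ZMod m,
      ∀ g ∈ Subgroup.closure {p : Equiv.Perm (Fin n → ZMod m) |
          ∃ q r : Fin n, (p : (Fin n → ZMod m) → (Fin n → ZMod m)) = Jqr m n q r},
        ∀ Y : Fin n → ZMod m,
          (fun i => a * (g Y) i + b) = g (fun i => a * Y i + b)) :=
  stmt_16_general m n
end

section
/- In ℤ/12ℤ, let O₀₁ = {0, 1, 3, 4, 6, 7, 9, 10} (an octatonic set) and let G₀ = { T₀, T₃, T₆, T₉, I₇, I₁₀, I₁, I₄ } ≤ Sym(ℤ/12ℤ), where T_k(x) = x + k and I_k(x) = −x + k; G₀ is the set-wise stabilizer of O₀₁ in the T/I-group. Then for every 3-element subset X of O₀₁, no nontrivial element of G₀ fixes X as a set, and consequently G₀ acts simply transitively on the orbit G₀X = { g(X) : g ∈ G₀ }: for all Y, Z ∈ G₀X there is a unique g ∈ G₀ with g(Y) = Z. -/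
/-!
An involution stabilizing a finite set of odd size fixes one of its points, since the other
points come in pairs `{x, h x}`. Every nontrivial element of `G₀` has a power that is an
involution without fixed points on `O₀₁`: `T₃` and `T₉` square to `T₆`, which moves every point,
and `I_k` fixes only the `x` with `2x = k`, none of which lies in `O₀₁` when `k ≡ 1 mod 3`.
Hence no nontrivial element of `G₀` stabilizes a subset of `O₀₁` of odd size, and since `G₀` is a
group, the trivial stabilizer makes its action on the orbit simply transitive.
-/

/-- The transposition T_k : x ↦ x + k on ℤ/12ℤ. -/
def Tr (k : ZMod 12) : Equiv.Perm (ZMod 12) := Equiv.addRight k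

/-- The inversion I_k : x ↦ −x + k on ℤ/12ℤ. -/
def Inv12 (k : ZMod 12) : Equiv.Perm (ZMod 12) :=
  (Equiv.neg (ZMod 12)).trans (Equiv.addRight k)

/-- The octatonic set O₀₁ = {0, 1, 3, 4, 6, 7, 9, 10} in ℤ/12ℤ. -/
def O01 : Set (ZMod 12) := {0, 1, 3, 4, 6, 7, 9, 10}

/-- The set-wise stabilizer G₀ = {T₀, T₃, T₆, T₉, I₇, I₁₀, I₁, I₄} of O₀₁. -/
def G0 : Set (Equiv.Perm (ZMod 12)) :=
  {Tr 0, Tr 3, Tr 6, Tr 9, Inv12 7, Inv12 10, Inv12 1, Inv12 4}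

open Equiv Pointwise

theorem Equiv.Perm.exists_mem_apply_eq_self_of_sq_eq_one {α : Type*} {h : Perm α}
    (hsq : h ^ 2 = 1) {X : Set α} (hX : h • X = X) (hodd : Odd X.ncard) :
    ∃ x ∈ X, h x = x := by
  classical
  have := (Set.finite_of_ncard_ne_zero hodd.pos.ne').fintype
  have hmem : ∀ x, h x ∈ X ↔ x ∈ X := fun x => by
    conv_lhs => rw [← hX]
    exact Set.smul_mem_smul_set_iff
  have hσ : h.subtypePerm hmem ^ 2 ^ 1 = 1 := by
    ext
    simp [Perm.subtypePerm_pow, hsq]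
  have hcard : ¬ 2 ∣ Fintype.card X := by
    rw [← Nat.card_eq_fintype_card, Nat.card_coe_set_eq, ← even_iff_two_dvd,
      Nat.not_even_iff_odd]
    exact hodd
  obtain ⟨⟨x, hx⟩, hfix⟩ := Perm.exists_fixed_point_of_prime (p := 2) hcard hσ
  exact ⟨x, hx, congrArg Subtype.val hfix⟩

theorem Subgroup.existsUnique_smul_eq_of_smul_eq_self {G β : Type*} [Group G] [MulAction G β]
    (H : Subgroup G) {x : β} (hx : ∀ g ∈ H, g • x = x → g = 1) {a b : G} (ha : a ∈ H)
    (hb : b ∈ H) : ∃! g, g ∈ H ∧ g • a • x = b • x := by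
  refine ⟨b * a⁻¹, ⟨H.mul_mem hb (H.inv_mem ha), by rw [smul_smul, inv_mul_cancel_right]⟩,
    ?_⟩
  rintro g ⟨hg, hgx⟩
  have hone : b⁻¹ * g * a = 1 :=
    hx _ (H.mul_mem (H.mul_mem (H.inv_mem hb) hg) ha)
      (by rw [mul_smul, mul_smul, hgx, inv_smul_smul])
  rw [mul_assoc, inv_mul_eq_one] at hone
  exact eq_mul_inv_of_mul_eq hone.symm

lemma mem_G0_iff {g : Perm (ZMod 12)} :
    g ∈ G0 ↔ g = Tr 0 ∨ g = Tr 3 ∨ g = Tr 6 ∨ g = Tr 9 ∨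
      g = Inv12 7 ∨ g = Inv12 10 ∨ g = Inv12 1 ∨ g = Inv12 4 := Iff.rfl

def G0Subgroup : Subgroup (Perm (ZMod 12)) where
  carrier := G0
  mul_mem' {a b} ha hb := by
    rcases mem_G0_iff.mp ha with rfl|rfl|rfl|rfl|rfl|rfl|rfl|rfl <;>
      rcases mem_G0_iff.mp hb with rfl|rfl|rfl|rfl|rfl|rfl|rfl|rfl <;>
      exact mem_G0_iff.mpr (by decide)
  one_mem' := mem_G0_iff.mpr (by decide)
  inv_mem' {a} ha := by
    rcases mem_G0_iff.mp ha with rfl|rfl|rfl|rfl|rfl|rfl|rfl|rfl <;>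
      exact mem_G0_iff.mpr (by decide)

lemma exists_pow_fixedPointFree_involution_on_O01 {g : Perm (ZMod 12)} (hg : g ∈ G0)
    (hg1 : g ≠ 1) :
    ∃ n : ℕ, (g ^ n) ^ 2 = 1 ∧ ∀ x ∈ O01, (g ^ n) x ≠ x := by
  unfold O01
  rcases mem_G0_iff.mp hg with rfl|rfl|rfl|rfl|rfl|rfl|rfl|rfl
  · exact absurd (by decide) hg1
  all_goals first | exact ⟨1, by decide⟩ | exact ⟨2, by decide⟩

theorem eq_one_of_mem_G0_of_smul_eq_self {X : Set (ZMod 12)} (hX : X ⊆ O01)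
    (hodd : Odd X.ncard) {g : Perm (ZMod 12)} (hg : g ∈ G0) (hgX : g • X = X) : g = 1 := by
  by_contra hg1
  obtain ⟨n, hsq, hfree⟩ := exists_pow_fixedPointFree_involution_on_O01 hg hg1
  have hgnX : g ^ n • X = X := (MulAction.stabilizer _ X).pow_mem hgX n
  obtain ⟨x, hx, hfix⟩ := Perm.exists_mem_apply_eq_self_of_sq_eq_one hsq hgnX hodd
  exact hfree x (hX hx) hfix

/-- Every 3-element subset X of the octatonic O₀₁ is fixed by no
nontrivial element of G₀, and consequently G₀ acts simply transitively on the
orbit G₀X. -/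
theorem stmt_18 :
    ∀ X : Set (ZMod 12), X ⊆ O01 → X.ncard = 3 →
      (∀ g ∈ G0, g '' X = X → g = 1) ∧
      (∀ Y ∈ {Y : Set (ZMod 12) | ∃ g ∈ G0, g '' X = Y},
       ∀ Z ∈ {Y : Set (ZMod 12) | ∃ g ∈ G0, g '' X = Y},
         ∃! g : Equiv.Perm (ZMod 12), g ∈ G0 ∧ g '' Y = Z) := by
  intro X hX h3
  -- for a permutation `g`, the image `g '' X` is definitionally `g • X`
  have hfree : ∀ g ∈ G0, g • X = X → g = 1 := fun g hg =>
    eq_one_of_mem_G0_of_smul_eq_self hX (h3 ▸ by decide) hg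
  refine ⟨hfree, ?_⟩
  rintro Y ⟨a, ha, rfl⟩ Z ⟨b, hb, rfl⟩
  exact G0Subgroup.existsUnique_smul_eq_of_smul_eq_self hfree ha hb
end

section
/- Let a, b, c ∈ ℤ/12ℤ be pairwise distinct and suppose there exists i ∈ ℤ/12ℤ with i ≠ 0 such that {a + i, b + i, c + i} = {a, b, c} as sets. Then there exists k ∈ ℤ/12ℤ with {a, b, c} = {k, k + 4, k + 8}; in particular, i = 4 or i = 8. -/
/-! A translation by `i ≠ 0` that preserves a three-element set has no fixed point in it, so it
permutes the set as a 3-cycle `a ↦ a + i ↦ a + 2i ↦ a + 3i = a`. Hence `3i = 0`, which in `ℤ/12ℤ`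
forces `i ∈ {4, 8}`, and the set is the orbit `{a, a + 4, a + 8}`. -/

section Translation

variable {G : Type*} [AddCancelCommMonoid G] {a b c i : G}

theorem add_cycle_of_add_triple_eq (hab : a ≠ b) (hac : a ≠ c) (hbc : b ≠ c) (hi : i ≠ 0)
    (h : ({a + i, b + i, c + i} : Set G) = {a, b, c}) :
    (a + i = b ∧ b + i = c ∧ c + i = a) ∨ (a + i = c ∧ c + i = b ∧ b + i = a) := by
  have hmem : ∀ x ∈ ({a, b, c} : Set G), x + i = a ∨ x + i = b ∨ x + i = c := by
    intro x hx
    have : x + i ∈ ({a + i, b + i, c + i} : Set G) := by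
      rcases hx with rfl | rfl | rfl <;> simp
    simpa [h] using this
  have hfix : ∀ x : G, x + i ≠ x := fun x hx => hi (add_eq_left.mp hx)
  have hinj : ∀ x y : G, x + i = y + i → x = y := fun _ _ => add_right_cancel
  have := hmem a (by simp)
  have := hmem b (by simp)
  have := hmem c (by simp)
  grind

theorem triple_eq_orbit_of_add_triple_eq (hab : a ≠ b) (hac : a ≠ c) (hbc : b ≠ c) (hi : i ≠ 0)
    (h : ({a + i, b + i, c + i} : Set G) = {a, b, c}) :
    ({a, b, c} : Set G) = {a, a + i, a + i + i} ∧ 3 • i = 0 := by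
  have hcycle : a + i + i + i = a → 3 • i = 0 := fun h3 =>
    add_eq_left.mp (by rw [succ_nsmul, two_nsmul, ← add_assoc, ← add_assoc, h3])
  rcases add_cycle_of_add_triple_eq hab hac hbc hi h with ⟨rfl, rfl, h3⟩ | ⟨rfl, rfl, h3⟩
  · exact ⟨rfl, hcycle h3⟩
  · exact ⟨Set.pair_comm _ _ ▸ rfl, hcycle h3⟩

end Translation

theorem ZMod.eq_four_or_eight_of_three_nsmul_eq_zero :
    ∀ i : ZMod 12, i ≠ 0 → 3 • i = 0 → i = 4 ∨ i = 8 := by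
  decide

/-- If a 3-element subset {a, b, c} of ℤ/12ℤ is fixed by a nontrivial
translation by i, then {a, b, c} = {k, k+4, k+8} for some k; in particular i = 4
or i = 8. -/
theorem stmt_19 (a b c i : ZMod 12) (hab : a ≠ b) (hac : a ≠ c) (hbc : b ≠ c)
    (hi : i ≠ 0)
    (h : ({a + i, b + i, c + i} : Set (ZMod 12)) = {a, b, c}) :
    (∃ k : ZMod 12, ({a, b, c} : Set (ZMod 12)) = {k, k + 4, k + 8}) ∧
    (i = 4 ∨ i = 8) := by
  obtain ⟨hS, h3⟩ := triple_eq_orbit_of_add_triple_eq hab hac hbc hi h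
  have hi48 := ZMod.eq_four_or_eight_of_three_nsmul_eq_zero i hi h3
  refine ⟨⟨a, ?_⟩, hi48⟩
  rw [hS, add_assoc]
  rcases hi48 with rfl | rfl
  · rw [show (4 + 4 : ZMod 12) = 8 from rfl]
  · rw [show (8 + 8 : ZMod 12) = 4 from rfl, Set.pair_comm]
end
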